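/- 3-amalgamation for bilinear spaces: suppose D ⊆ A, B, C and A, B ⊆ V₁, A, C ⊆ V₂, B, C ⊆ V₃ are K-bilinear spaces with compatible inclusions, and A ⫝_D B (in V₁), B ⫝_D C (in V₃), C ⫝_D A (in V₂). Then there is a K-bilinear space W with bilinear monomorphisms from V₁, V₂, V₃ making the cube commute, and such that in W: A ⫝_D V₃, B ⫝_D V₂, and C ⫝_D V₁. If all of V₁, V₂, V₃ are symmetric (resp. alternating), W can be chosen symmetric (resp. alternating). -/

import Mathlib

/-!
Over a field, injective linear maps have linear retractions. Because `A ∩ C = D` in `V₂`, the map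
`A × ker ρ → V₂`, `(a, c) ↦ a + c`, is injective for any retraction `ρ : C → D`, and a retraction
of it splits `V₂` as `A ⊕ ker ρ ⊕ (rest)`; likewise `V₃ = B ⊕ ker ρ ⊕ (rest)`, and `V₁` splits off
`A ⊕ ker ρ_B` for a retraction `ρ_B : B → D`. The amalgam is `W = V₁ × C × V₂ × V₃`: `V₁` is the
first factor, `V₂` goes to `(A-part, ker ρ-part, rest, 0)` and `V₃` to `(B-part, ker ρ-part, 0,
rest)`; using the same `ρ` for both makes the two copies of `C` agree. Every pair of coordinates is
paired inside one of the `Vᵢ` containing both, so each `Vᵢ` embeds isometrically and symmetry or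
alternation is inherited. Independence is read off a single coordinate: the `V₁`-coordinate of
`V₂` lies in `A` and that of `V₃` in `B`, which meet in `D`; and a retraction `W → V₂` maps `V₁`
into `A`, which meets `C` in `D`.
-/

universe u

section Splitting

variable {K A C D V : Type*} [DivisionRing K] [AddCommGroup A] [Module K A] [AddCommGroup C]
  [Module K C] [AddCommGroup D] [Module K D] [AddCommGroup V] [Module K V]

theorem exists_splitting_of_inf_range_le {u : A →ₗ[K] V} {w : C →ₗ[K] V}
    (hu : Function.Injective u) (hw : Function.Injective w) {dA : D →ₗ[K] A} {dC : D →ₗ[K] C}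
    (hcomm : ∀ d, u (dA d) = w (dC d))
    (hmeet : LinearMap.range u ⊓ LinearMap.range w ≤ LinearMap.range (u ∘ₗ dA))
    {ρ : C →ₗ[K] D} (hρ : ∀ d, ρ (dC d) = d) :
    ∃ (α : V →ₗ[K] A) (γ : V →ₗ[K] C), (∀ a, α (u a) = a) ∧ (∀ a, γ (u a) = 0) ∧
      (∀ c, α (w c) = dA (ρ c)) ∧ (∀ c, γ (w c) = c - dC (ρ c)) := by
  let P := LinearMap.ker ρ
  let φ : (A × P) →ₗ[K] V := u.coprod (w ∘ₗ P.subtype)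
  have hφ : LinearMap.ker φ = ⊥ := by
    rw [LinearMap.ker_eq_bot']
    rintro ⟨a, c, hc⟩ h
    have hwc : w (-c) = u a := by
      rw [map_neg, neg_eq_iff_add_eq_zero, add_comm]; simpa [φ] using h
    obtain ⟨d, hd⟩ := hmeet ⟨⟨a, rfl⟩, ⟨-c, hwc⟩⟩
    have hcd : -c = dC d := hw (by rw [hwc, ← hd, LinearMap.comp_apply, hcomm])
    have hd0 : d = 0 := by rw [← hρ d, ← hcd, map_neg, LinearMap.mem_ker.mp hc, neg_zero]
    have hc0 : c = 0 := by rw [← neg_eq_zero, hcd, hd0, map_zero]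
    have ha0 : a = 0 := hu (by rw [← hwc, hc0, neg_zero, map_zero, map_zero])
    simp [ha0, hc0]
  obtain ⟨r, hr⟩ := φ.exists_leftInverse_of_injective hφ
  have hrφ : ∀ p, r (φ p) = p := LinearMap.congr_fun hr
  have hu' : ∀ a, u a = φ (a, 0) := fun a => by simp [φ]
  have hw' : ∀ c, w c = φ (dA (ρ c), ⟨c - dC (ρ c), by simp [P, hρ]⟩) := fun c => by
    simp [φ, hcomm]
  refine ⟨LinearMap.fst K A P ∘ₗ r, P.subtype ∘ₗ LinearMap.snd K A P ∘ₗ r,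
    fun a => ?_, fun a => ?_, fun c => ?_, fun c => ?_⟩ <;>
  simp [hu', hw', hrφ]

end Splitting

section Independence

variable {K V W A T D X : Type*} [Semiring K] [AddCommMonoid V] [Module K V]
  [AddCommMonoid W] [Module K W] [AddCommMonoid A] [Module K A] [AddCommMonoid T] [Module K T]
  [AddCommMonoid D] [Module K D] [AddCommMonoid X] [Module K X]

theorem range_comp_inf_range_eq_of_leftInverse {f : V →ₗ[K] W} {π : W →ₗ[K] V}
    (hπ : ∀ v, π (f v) = v) {u : A →ₗ[K] V} {t : T →ₗ[K] V} {d : D →ₗ[K] A}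
    (hut : LinearMap.range u ⊓ LinearMap.range t = LinearMap.range (u ∘ₗ d))
    {g : X →ₗ[K] W} (hgt : ∀ x, π (g x) ∈ LinearMap.range t)
    (hfg : LinearMap.range (f ∘ₗ u ∘ₗ d) ≤ LinearMap.range g) :
    LinearMap.range (f ∘ₗ u) ⊓ LinearMap.range g = LinearMap.range (f ∘ₗ u ∘ₗ d) := by
  refine le_antisymm ?_ (le_inf (LinearMap.range_comp_le_range d (f ∘ₗ u)) hfg)
  · rintro _ ⟨⟨a, rfl⟩, ⟨x, hx⟩⟩
    have hua : u a ∈ LinearMap.range u ⊓ LinearMap.range t :=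
      ⟨⟨a, rfl⟩, by simpa [hx, hπ] using hgt x⟩
    obtain ⟨δ, hδ⟩ := hut ▸ hua
    exact ⟨δ, by simp [← hδ]⟩

end Independence

section Amalgam

variable {K D A B C V₁ V₂ V₃ : Type*} [CommRing K] [AddCommGroup D] [Module K D]
  [AddCommGroup A] [Module K A] [AddCommGroup B] [Module K B] [AddCommGroup C] [Module K C]
  [AddCommGroup V₁] [Module K V₁] [AddCommGroup V₂] [Module K V₂]
  [AddCommGroup V₃] [Module K V₃]
  (B₁ : V₁ →ₗ[K] V₁ →ₗ[K] K) (B₂ : V₂ →ₗ[K] V₂ →ₗ[K] K) (B₃ : V₃ →ₗ[K] V₃ →ₗ[K] K)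
  (aV₁ : A →ₗ[K] V₁) (bV₁ : B →ₗ[K] V₁) (aV₂ : A →ₗ[K] V₂) (cV₂ : C →ₗ[K] V₂)
  (bV₃ : B →ₗ[K] V₃) (cV₃ : C →ₗ[K] V₃)

/-- On coordinates `(x, c, y, z)`, pairs are computed in `V₂` (for `c`, `y` and the `A`-part `α x`
of `x`) or in `V₃` (for `c`, `z` and the `B`-parts of `x`); the `c`–`c'` term occurs in both and is
subtracted once. Against `c`, the `A + B` part of `x` is split as `α x + β x` with `β x` free of
`D`, so that `D` is not counted twice; against `z` the whole `B`-part `q x` is used. -/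
def amalgamForm (α : V₁ →ₗ[K] A) (β q : V₁ →ₗ[K] B) :
    (V₁ × C × V₂ × V₃) →ₗ[K] (V₁ × C × V₂ × V₃) →ₗ[K] K :=
  LinearMap.mk₂ K (fun ⟨x, c, y, z⟩ ⟨x', c', y', z'⟩ =>
      B₁ x x'
      + (B₂ (aV₂ (α x)) (cV₂ c') + B₃ (bV₃ (β x)) (cV₃ c'))
      + (B₂ (cV₂ c) (aV₂ (α x')) + B₃ (cV₃ c) (bV₃ (β x')))
      + B₂ (aV₂ (α x)) y' + B₂ y (aV₂ (α x'))
      + B₃ (bV₃ (q x)) z' + B₃ z (bV₃ (q x'))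
      + B₂ (cV₂ c + y) (cV₂ c' + y') + B₃ (cV₃ c + z) (cV₃ c' + z') - B₃ (cV₃ c) (cV₃ c'))
    (fun _ _ _ => by simp only [map_add, LinearMap.add_apply]; ring)
    (fun _ _ _ => by
      simp only [Prod.smul_fst, Prod.smul_snd, map_smul, ← smul_add, LinearMap.smul_apply,
        smul_eq_mul]
      ring)
    (fun _ _ _ => by simp only [map_add, LinearMap.add_apply]; ring)
    (fun _ _ _ => by
      simp only [Prod.smul_fst, Prod.smul_snd, map_smul, ← smul_add, smul_eq_mul]
      ring)

theorem amalgamForm_apply (α : V₁ →ₗ[K] A) (β q : V₁ →ₗ[K] B) (x x' : V₁) (c c' : C)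
    (y y' : V₂) (z z' : V₃) :
    amalgamForm B₁ B₂ B₃ aV₂ cV₂ bV₃ cV₃ α β q (x, c, y, z) (x', c', y', z') =
      B₁ x x'
      + (B₂ (aV₂ (α x)) (cV₂ c') + B₃ (bV₃ (β x)) (cV₃ c'))
      + (B₂ (cV₂ c) (aV₂ (α x')) + B₃ (cV₃ c) (bV₃ (β x')))
      + B₂ (aV₂ (α x)) y' + B₂ y (aV₂ (α x'))
      + B₃ (bV₃ (q x)) z' + B₃ z (bV₃ (q x'))
      + B₂ (cV₂ c + y) (cV₂ c' + y') + B₃ (cV₃ c + z) (cV₃ c' + z') - B₃ (cV₃ c) (cV₃ c') :=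
  rfl

def amalgamEmbed₂ (α₂ : V₂ →ₗ[K] A) (γ₂ : V₂ →ₗ[K] C) : V₂ →ₗ[K] V₁ × C × V₂ × V₃ :=
  (aV₁ ∘ₗ α₂).prod (γ₂.prod ((LinearMap.id - aV₂ ∘ₗ α₂ - cV₂ ∘ₗ γ₂).prod 0))

def amalgamEmbed₃ (β₃ : V₃ →ₗ[K] B) (γ₃ : V₃ →ₗ[K] C) : V₃ →ₗ[K] V₁ × C × V₂ × V₃ :=
  (bV₁ ∘ₗ β₃).prod (γ₃.prod ((0 : V₃ →ₗ[K] V₂).prod (LinearMap.id - bV₃ ∘ₗ β₃ - cV₃ ∘ₗ γ₃)))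

@[simp]
theorem amalgamEmbed₂_apply (α₂ : V₂ →ₗ[K] A) (γ₂ : V₂ →ₗ[K] C) (y : V₂) :
    amalgamEmbed₂ aV₁ aV₂ cV₂ α₂ γ₂ y (V₃ := V₃) =
      (aV₁ (α₂ y), γ₂ y, y - aV₂ (α₂ y) - cV₂ (γ₂ y), 0) :=
  rfl

@[simp]
theorem amalgamEmbed₃_apply (β₃ : V₃ →ₗ[K] B) (γ₃ : V₃ →ₗ[K] C) (z : V₃) :
    amalgamEmbed₃ bV₁ bV₃ cV₃ β₃ γ₃ z (V₂ := V₂) =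
      (bV₁ (β₃ z), γ₃ z, 0, z - bV₃ (β₃ z) - cV₃ (γ₃ z)) :=
  rfl

variable {B₁ B₂ B₃ aV₁ bV₁ aV₂ cV₂ bV₃ cV₃}

theorem amalgamForm_inl (α : V₁ →ₗ[K] A) (β q : V₁ →ₗ[K] B) (x x' : V₁) :
    amalgamForm B₁ B₂ B₃ aV₂ cV₂ bV₃ cV₃ α β q (LinearMap.inl K V₁ _ x)
      (LinearMap.inl K V₁ _ x') = B₁ x x' := by
  change amalgamForm B₁ B₂ B₃ aV₂ cV₂ bV₃ cV₃ α β q (x, 0, 0, 0) (x', 0, 0, 0) = _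
  simp [amalgamForm_apply]

theorem amalgamForm_amalgamEmbed₂ {α : V₁ →ₗ[K] A} {β q : V₁ →ₗ[K] B}
    (hα : ∀ a, α (aV₁ a) = a) (hβ : ∀ a, β (aV₁ a) = 0)
    (hA : ∀ a a', B₁ (aV₁ a) (aV₁ a') = B₂ (aV₂ a) (aV₂ a')) (α₂ : V₂ →ₗ[K] A)
    (γ₂ : V₂ →ₗ[K] C) (y y' : V₂) :
    amalgamForm B₁ B₂ B₃ aV₂ cV₂ bV₃ cV₃ α β q (amalgamEmbed₂ aV₁ aV₂ cV₂ α₂ γ₂ y)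
      (amalgamEmbed₂ aV₁ aV₂ cV₂ α₂ γ₂ y') = B₂ y y' := by
  simp only [amalgamEmbed₂_apply, amalgamForm_apply, hα, hβ, map_add, map_sub, map_zero,
    LinearMap.add_apply, LinearMap.sub_apply, LinearMap.zero_apply]
  linear_combination hA (α₂ y) (α₂ y')

theorem amalgamForm_amalgamEmbed₃ {dA : D →ₗ[K] A} {dB : D →ₗ[K] B} {dC : D →ₗ[K] C}
    {ρ : B →ₗ[K] D} {α : V₁ →ₗ[K] A} {β q : V₁ →ₗ[K] B}
    (hα : ∀ b, α (bV₁ b) = dA (ρ b)) (hβ : ∀ b, β (bV₁ b) = b - dB (ρ b))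
    (hq : ∀ b, q (bV₁ b) = b) (hc₂ : ∀ d, aV₂ (dA d) = cV₂ (dC d))
    (hc₃ : ∀ d, bV₃ (dB d) = cV₃ (dC d))
    (hB : ∀ b b', B₁ (bV₁ b) (bV₁ b') = B₃ (bV₃ b) (bV₃ b'))
    (hC : ∀ c c', B₂ (cV₂ c) (cV₂ c') = B₃ (cV₃ c) (cV₃ c')) (β₃ : V₃ →ₗ[K] B)
    (γ₃ : V₃ →ₗ[K] C) (z z' : V₃) :
    amalgamForm B₁ B₂ B₃ aV₂ cV₂ bV₃ cV₃ α β q (amalgamEmbed₃ bV₁ bV₃ cV₃ β₃ γ₃ z)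
      (amalgamEmbed₃ bV₁ bV₃ cV₃ β₃ γ₃ z') = B₃ z z' := by
  simp only [amalgamEmbed₃_apply, amalgamForm_apply, hα, hβ, hq, hc₂, hc₃, map_add, map_sub,
    map_zero, LinearMap.add_apply, LinearMap.sub_apply, LinearMap.zero_apply]
  linear_combination hB (β₃ z) (β₃ z') + hC (γ₃ z) (γ₃ z') + hC (dC (ρ (β₃ z))) (γ₃ z')
    + hC (γ₃ z) (dC (ρ (β₃ z')))

theorem amalgamForm_comm (h₁ : ∀ x x', B₁ x x' = B₁ x' x) (h₂ : ∀ y y', B₂ y y' = B₂ y' y)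
    (h₃ : ∀ z z', B₃ z z' = B₃ z' z) (α : V₁ →ₗ[K] A) (β q : V₁ →ₗ[K] B)
    (w w' : V₁ × C × V₂ × V₃) :
    amalgamForm B₁ B₂ B₃ aV₂ cV₂ bV₃ cV₃ α β q w w' =
      amalgamForm B₁ B₂ B₃ aV₂ cV₂ bV₃ cV₃ α β q w' w := by
  obtain ⟨x, c, y, z⟩ := w
  obtain ⟨x', c', y', z'⟩ := w'
  have e₁ : B₁ = B₁.flip := LinearMap.ext₂ h₁
  have e₂ : B₂ = B₂.flip := LinearMap.ext₂ h₂
  have e₃ : B₃ = B₃.flip := LinearMap.ext₂ h₃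
  simp only [amalgamForm_apply]
  conv_rhs => rw [e₁, e₂, e₃]
  simp only [LinearMap.flip_apply]
  ring

theorem amalgamForm_self_eq_zero (h₁ : ∀ x, B₁ x x = 0) (h₂ : ∀ y, B₂ y y = 0)
    (h₃ : ∀ z, B₃ z z = 0) (α : V₁ →ₗ[K] A) (β q : V₁ →ₗ[K] B) (w : V₁ × C × V₂ × V₃) :
    amalgamForm B₁ B₂ B₃ aV₂ cV₂ bV₃ cV₃ α β q w w = 0 := by
  obtain ⟨x, c, y, z⟩ := w
  have h₂' : ∀ y y', B₂ y y' + B₂ y' y = 0 := fun y y' => by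
    simpa [h₂] using h₂ (y + y')
  have h₃' : ∀ z z', B₃ z z' + B₃ z' z = 0 := fun z z' => by
    simpa [h₃] using h₃ (z + z')
  rw [amalgamForm_apply]
  linear_combination h₁ x + h₂' (aV₂ (α x)) (cV₂ c) + h₃' (bV₃ (β x)) (cV₃ c)
    + h₂' (aV₂ (α x)) y + h₃' (bV₃ (q x)) z + h₂ (cV₂ c + y) + h₃ (cV₃ c + z) - h₃ (cV₃ c)

theorem inl_comp_eq_amalgamEmbed₂_comp {α₂ : V₂ →ₗ[K] A} {γ₂ : V₂ →ₗ[K] C}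
    (hα₂ : ∀ a, α₂ (aV₂ a) = a) (hγ₂ : ∀ a, γ₂ (aV₂ a) = 0) :
    LinearMap.inl K V₁ (C × V₂ × V₃) ∘ₗ aV₁ = amalgamEmbed₂ aV₁ aV₂ cV₂ α₂ γ₂ ∘ₗ aV₂ :=
  LinearMap.ext fun a => by simp [hα₂, hγ₂, Prod.mk_zero_zero]

theorem inl_comp_eq_amalgamEmbed₃_comp {β₃ : V₃ →ₗ[K] B} {γ₃ : V₃ →ₗ[K] C}
    (hβ₃ : ∀ b, β₃ (bV₃ b) = b) (hγ₃ : ∀ b, γ₃ (bV₃ b) = 0) :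
    LinearMap.inl K V₁ (C × V₂ × V₃) ∘ₗ bV₁ = amalgamEmbed₃ bV₁ bV₃ cV₃ β₃ γ₃ ∘ₗ bV₃ :=
  LinearMap.ext fun b => by simp [hβ₃, hγ₃, Prod.mk_zero_zero]

theorem amalgamEmbed₂_comp_eq_amalgamEmbed₃_comp {dA : D →ₗ[K] A} {dB : D →ₗ[K] B}
    {dC : D →ₗ[K] C} {ρ : C →ₗ[K] D} {α₂ : V₂ →ₗ[K] A} {γ₂ : V₂ →ₗ[K] C} {β₃ : V₃ →ₗ[K] B}
    {γ₃ : V₃ →ₗ[K] C} (hα₂ : ∀ c, α₂ (cV₂ c) = dA (ρ c)) (hγ₂ : ∀ c, γ₂ (cV₂ c) = c - dC (ρ c))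
    (hβ₃ : ∀ c, β₃ (cV₃ c) = dB (ρ c)) (hγ₃ : ∀ c, γ₃ (cV₃ c) = c - dC (ρ c))
    (hc₁ : ∀ d, aV₁ (dA d) = bV₁ (dB d)) (hc₂ : ∀ d, aV₂ (dA d) = cV₂ (dC d))
    (hc₃ : ∀ d, bV₃ (dB d) = cV₃ (dC d)) :
    amalgamEmbed₂ aV₁ aV₂ cV₂ α₂ γ₂ ∘ₗ cV₂ = amalgamEmbed₃ bV₁ bV₃ cV₃ β₃ γ₃ ∘ₗ cV₃ :=
  LinearMap.ext fun c => by simp [hα₂, hγ₂, hβ₃, hγ₃, hc₁, hc₂, hc₃]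

theorem exists_leftInverse_amalgamEmbed₂ {α : V₁ →ₗ[K] A} (hα : ∀ a, α (aV₁ a) = a)
    (α₂ : V₂ →ₗ[K] A) (γ₂ : V₂ →ₗ[K] C) :
    ∃ s : V₁ × C × V₂ × V₃ →ₗ[K] V₂,
      Function.LeftInverse s (amalgamEmbed₂ aV₁ aV₂ cV₂ α₂ γ₂) ∧
      ∀ x, s (x, 0) ∈ LinearMap.range aV₂ :=
  ⟨(aV₂ ∘ₗ α).coprod (cV₂.coprod (LinearMap.fst K V₂ V₃)), fun y => by simp [hα],
    fun x => ⟨α x, by simp⟩⟩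

theorem amalgamEmbed₂_injective {α : V₁ →ₗ[K] A} (hα : ∀ a, α (aV₁ a) = a)
    (α₂ : V₂ →ₗ[K] A) (γ₂ : V₂ →ₗ[K] C) :
    Function.Injective (amalgamEmbed₂ aV₁ aV₂ cV₂ α₂ γ₂ (V₃ := V₃)) :=
  (exists_leftInverse_amalgamEmbed₂ hα α₂ γ₂).choose_spec.1.injective

theorem amalgamEmbed₃_injective {q : V₁ →ₗ[K] B} (hq : ∀ b, q (bV₁ b) = b)
    (β₃ : V₃ →ₗ[K] B) (γ₃ : V₃ →ₗ[K] C) :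
    Function.Injective (amalgamEmbed₃ bV₁ bV₃ cV₃ β₃ γ₃ (V₂ := V₂)) :=
  Function.LeftInverse.injective (g := (bV₃ ∘ₗ q).coprod (cV₃.coprod (LinearMap.snd K V₂ V₃)))
    fun z => by simp [hq]

theorem range_inl_comp_inf_range_amalgamEmbed₃ {dA : D →ₗ[K] A} {dB : D →ₗ[K] B}
    {β₃ : V₃ →ₗ[K] B} {γ₃ : V₃ →ₗ[K] C}
    (hAB : LinearMap.range aV₁ ⊓ LinearMap.range bV₁ = LinearMap.range (aV₁ ∘ₗ dA))
    (hcomm₁ : aV₁ ∘ₗ dA = bV₁ ∘ₗ dB)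
    (h₁₃ : LinearMap.inl K V₁ (C × V₂ × V₃) ∘ₗ bV₁ = amalgamEmbed₃ bV₁ bV₃ cV₃ β₃ γ₃ ∘ₗ bV₃) :
    LinearMap.range (LinearMap.inl K V₁ (C × V₂ × V₃) ∘ₗ aV₁) ⊓
        LinearMap.range (amalgamEmbed₃ bV₁ bV₃ cV₃ β₃ γ₃) =
      LinearMap.range (LinearMap.inl K V₁ (C × V₂ × V₃) ∘ₗ aV₁ ∘ₗ dA) := by
  refine range_comp_inf_range_eq_of_leftInverse (π := LinearMap.fst K V₁ _) (fun _ => rfl) hAB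
    (fun z => ⟨β₃ z, rfl⟩) ?_
  rw [hcomm₁, ← LinearMap.comp_assoc, h₁₃, LinearMap.comp_assoc]
  exact LinearMap.range_comp_le_range _ _

theorem range_amalgamEmbed₃_comp_inf_range_amalgamEmbed₂ {dA : D →ₗ[K] A} {dB : D →ₗ[K] B}
    {α₂ : V₂ →ₗ[K] A} {γ₂ : V₂ →ₗ[K] C} {β₃ : V₃ →ₗ[K] B} {γ₃ : V₃ →ₗ[K] C}
    (hAB : LinearMap.range aV₁ ⊓ LinearMap.range bV₁ = LinearMap.range (aV₁ ∘ₗ dA))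
    (hcomm₁ : aV₁ ∘ₗ dA = bV₁ ∘ₗ dB)
    (h₁₂ : LinearMap.inl K V₁ (C × V₂ × V₃) ∘ₗ aV₁ = amalgamEmbed₂ aV₁ aV₂ cV₂ α₂ γ₂ ∘ₗ aV₂)
    (h₁₃ : LinearMap.inl K V₁ (C × V₂ × V₃) ∘ₗ bV₁ = amalgamEmbed₃ bV₁ bV₃ cV₃ β₃ γ₃ ∘ₗ bV₃) :
    LinearMap.range (amalgamEmbed₃ bV₁ bV₃ cV₃ β₃ γ₃ ∘ₗ bV₃) ⊓
        LinearMap.range (amalgamEmbed₂ aV₁ aV₂ cV₂ α₂ γ₂) =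
      LinearMap.range (LinearMap.inl K V₁ (C × V₂ × V₃) ∘ₗ aV₁ ∘ₗ dA) := by
  rw [← h₁₃, hcomm₁]
  refine range_comp_inf_range_eq_of_leftInverse (π := LinearMap.fst K V₁ _) (fun _ => rfl)
    (by rw [inf_comm, hAB, hcomm₁]) (fun y => ⟨α₂ y, rfl⟩) ?_
  rw [← hcomm₁, ← LinearMap.comp_assoc, h₁₂, LinearMap.comp_assoc]
  exact LinearMap.range_comp_le_range _ _

theorem range_amalgamEmbed₂_comp_inf_range_inl {dA : D →ₗ[K] A} {dC : D →ₗ[K] C}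
    {α : V₁ →ₗ[K] A} {α₂ : V₂ →ₗ[K] A} {γ₂ : V₂ →ₗ[K] C} (hα : ∀ a, α (aV₁ a) = a)
    (hCA : LinearMap.range cV₂ ⊓ LinearMap.range aV₂ = LinearMap.range (cV₂ ∘ₗ dC))
    (hcomm₂ : aV₂ ∘ₗ dA = cV₂ ∘ₗ dC)
    (h₁₂ : LinearMap.inl K V₁ (C × V₂ × V₃) ∘ₗ aV₁ = amalgamEmbed₂ aV₁ aV₂ cV₂ α₂ γ₂ ∘ₗ aV₂) :
    LinearMap.range (amalgamEmbed₂ aV₁ aV₂ cV₂ α₂ γ₂ ∘ₗ cV₂) ⊓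
        LinearMap.range (LinearMap.inl K V₁ (C × V₂ × V₃)) =
      LinearMap.range (LinearMap.inl K V₁ (C × V₂ × V₃) ∘ₗ aV₁ ∘ₗ dA) := by
  obtain ⟨s, hs, hsA⟩ := exists_leftInverse_amalgamEmbed₂ (V₃ := V₃) hα α₂ γ₂
  have hD : LinearMap.inl K V₁ (C × V₂ × V₃) ∘ₗ aV₁ ∘ₗ dA =
      amalgamEmbed₂ aV₁ aV₂ cV₂ α₂ γ₂ ∘ₗ cV₂ ∘ₗ dC := by
    rw [← hcomm₂, ← LinearMap.comp_assoc, h₁₂, LinearMap.comp_assoc]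
  rw [hD]
  refine range_comp_inf_range_eq_of_leftInverse hs hCA hsA ?_
  rw [← hD]
  exact LinearMap.range_comp_le_range _ _

end Amalgam

theorem bilinear_three_amalgamation_general {K : Type u} [Field K]
    (D A B C V₁ V₂ V₃ : Type u)
    [AddCommGroup D] [Module K D] [AddCommGroup A] [Module K A]
    [AddCommGroup B] [Module K B] [AddCommGroup C] [Module K C]
    [AddCommGroup V₁] [Module K V₁] [AddCommGroup V₂] [Module K V₂]
    [AddCommGroup V₃] [Module K V₃]
    (BA : A →ₗ[K] A →ₗ[K] K) (BB : B →ₗ[K] B →ₗ[K] K)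
    (BC : C →ₗ[K] C →ₗ[K] K) (B₁ : V₁ →ₗ[K] V₁ →ₗ[K] K) (B₂ : V₂ →ₗ[K] V₂ →ₗ[K] K)
    (B₃ : V₃ →ₗ[K] V₃ →ₗ[K] K)
    (dA : D →ₗ[K] A) (dB : D →ₗ[K] B) (dC : D →ₗ[K] C)
    (aV₁ : A →ₗ[K] V₁) (bV₁ : B →ₗ[K] V₁) (aV₂ : A →ₗ[K] V₂) (cV₂ : C →ₗ[K] V₂)
    (bV₃ : B →ₗ[K] V₃) (cV₃ : C →ₗ[K] V₃)
    (hdB : Function.Injective dB)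
    (hdC : Function.Injective dC)
    (haV₁ : Function.Injective aV₁) (haV₁b : ∀ x y : A, B₁ (aV₁ x) (aV₁ y) = BA x y)
    (hbV₁ : Function.Injective bV₁) (hbV₁b : ∀ x y : B, B₁ (bV₁ x) (bV₁ y) = BB x y)
    (haV₂ : Function.Injective aV₂) (haV₂b : ∀ x y : A, B₂ (aV₂ x) (aV₂ y) = BA x y)
    (hcV₂ : Function.Injective cV₂) (hcV₂b : ∀ x y : C, B₂ (cV₂ x) (cV₂ y) = BC x y)
    (hbV₃ : Function.Injective bV₃) (hbV₃b : ∀ x y : B, B₃ (bV₃ x) (bV₃ y) = BB x y)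
    (hcV₃ : Function.Injective cV₃) (hcV₃b : ∀ x y : C, B₃ (cV₃ x) (cV₃ y) = BC x y)
    (hcomm₁ : aV₁ ∘ₗ dA = bV₁ ∘ₗ dB)
    (hcomm₂ : aV₂ ∘ₗ dA = cV₂ ∘ₗ dC)
    (hcomm₃ : bV₃ ∘ₗ dB = cV₃ ∘ₗ dC)
    (hAB : LinearMap.range aV₁ ⊓ LinearMap.range bV₁ = LinearMap.range (aV₁ ∘ₗ dA))
    (hBC : LinearMap.range bV₃ ⊓ LinearMap.range cV₃ = LinearMap.range (bV₃ ∘ₗ dB))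
    (hCA : LinearMap.range cV₂ ⊓ LinearMap.range aV₂ = LinearMap.range (cV₂ ∘ₗ dC)) :
    ∃ (W : Type u) (_ : AddCommGroup W) (_ : Module K W)
      (BW : W →ₗ[K] W →ₗ[K] K) (g₁ : V₁ →ₗ[K] W) (g₂ : V₂ →ₗ[K] W) (g₃ : V₃ →ₗ[K] W),
      Function.Injective g₁ ∧ (∀ x y : V₁, BW (g₁ x) (g₁ y) = B₁ x y) ∧
      Function.Injective g₂ ∧ (∀ x y : V₂, BW (g₂ x) (g₂ y) = B₂ x y) ∧
      Function.Injective g₃ ∧ (∀ x y : V₃, BW (g₃ x) (g₃ y) = B₃ x y) ∧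
      g₁ ∘ₗ aV₁ = g₂ ∘ₗ aV₂ ∧ g₁ ∘ₗ bV₁ = g₃ ∘ₗ bV₃ ∧ g₂ ∘ₗ cV₂ = g₃ ∘ₗ cV₃ ∧
      (LinearMap.range (g₁ ∘ₗ aV₁) ⊓ LinearMap.range g₃ =
        LinearMap.range (g₁ ∘ₗ aV₁ ∘ₗ dA)) ∧
      (LinearMap.range (g₃ ∘ₗ bV₃) ⊓ LinearMap.range g₂ =
        LinearMap.range (g₁ ∘ₗ aV₁ ∘ₗ dA)) ∧
      (LinearMap.range (g₂ ∘ₗ cV₂) ⊓ LinearMap.range g₁ =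
        LinearMap.range (g₁ ∘ₗ aV₁ ∘ₗ dA)) ∧
      ((∀ x y : V₁, B₁ x y = B₁ y x) → (∀ x y : V₂, B₂ x y = B₂ y x) →
        (∀ x y : V₃, B₃ x y = B₃ y x) → ∀ x y : W, BW x y = BW y x) ∧
      ((∀ x : V₁, B₁ x x = 0) → (∀ x : V₂, B₂ x x = 0) →
        (∀ x : V₃, B₃ x x = 0) → ∀ x : W, BW x x = 0) := by
  have hc₁ := LinearMap.congr_fun hcomm₁
  have hc₂ := LinearMap.congr_fun hcomm₂
  have hc₃ := LinearMap.congr_fun hcomm₃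
  obtain ⟨ρB, hρB⟩ := dB.exists_leftInverse_of_injective (LinearMap.ker_eq_bot.mpr hdB)
  obtain ⟨ρC, hρC⟩ := dC.exists_leftInverse_of_injective (LinearMap.ker_eq_bot.mpr hdC)
  obtain ⟨q, hq⟩ := bV₁.exists_leftInverse_of_injective (LinearMap.ker_eq_bot.mpr hbV₁)
  obtain ⟨α₁, β₁, hα₁a, hβ₁a, hα₁b, hβ₁b⟩ := exists_splitting_of_inf_range_le haV₁ hbV₁ hc₁
    hAB.le (LinearMap.congr_fun hρB)
  obtain ⟨α₂, γ₂, hα₂a, hγ₂a, hα₂c, hγ₂c⟩ := exists_splitting_of_inf_range_le haV₂ hcV₂ hc₂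
    (by rw [inf_comm, hCA, ← hcomm₂]) (LinearMap.congr_fun hρC)
  obtain ⟨β₃, γ₃, hβ₃b, hγ₃b, hβ₃c, hγ₃c⟩ := exists_splitting_of_inf_range_le hbV₃ hcV₃ hc₃
    hBC.le (LinearMap.congr_fun hρC)
  have h₁₂ := inl_comp_eq_amalgamEmbed₂_comp (aV₁ := aV₁) (cV₂ := cV₂) (V₃ := V₃) hα₂a hγ₂a
  have h₁₃ := inl_comp_eq_amalgamEmbed₃_comp (bV₁ := bV₁) (cV₃ := cV₃) (V₂ := V₂) hβ₃b hγ₃b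
  exact ⟨_, _, _, amalgamForm B₁ B₂ B₃ aV₂ cV₂ bV₃ cV₃ α₁ β₁ q, LinearMap.inl K V₁ _, _, _,
    LinearMap.inl_injective, amalgamForm_inl α₁ β₁ q,
    amalgamEmbed₂_injective hα₁a α₂ γ₂,
    amalgamForm_amalgamEmbed₂ hα₁a hβ₁a (fun a a' => by rw [haV₁b, haV₂b]) α₂ γ₂,
    amalgamEmbed₃_injective (LinearMap.congr_fun hq) β₃ γ₃,
    amalgamForm_amalgamEmbed₃ hα₁b hβ₁b (LinearMap.congr_fun hq) hc₂ hc₃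
      (fun b b' => by rw [hbV₁b, hbV₃b]) (fun c c' => by rw [hcV₂b, hcV₃b]) β₃ γ₃,
    h₁₂, h₁₃, amalgamEmbed₂_comp_eq_amalgamEmbed₃_comp hα₂c hγ₂c hβ₃c hγ₃c hc₁ hc₂ hc₃,
    range_inl_comp_inf_range_amalgamEmbed₃ hAB hcomm₁ h₁₃,
    range_amalgamEmbed₃_comp_inf_range_amalgamEmbed₂ hAB hcomm₁ h₁₂ h₁₃,
    range_amalgamEmbed₂_comp_inf_range_inl hα₁a hCA hcomm₂ h₁₂,
    fun h₁ h₂ h₃ => amalgamForm_comm h₁ h₂ h₃ α₁ β₁ q,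
    fun h₁ h₂ h₃ => amalgamForm_self_eq_zero h₁ h₂ h₃ α₁ β₁ q⟩

/-- 3-amalgamation for bilinear spaces: given a commuting system of bilinear monomorphisms
from `D` into `A, B, C` and from those into `V₁ ⊇ A, B`, `V₂ ⊇ A, C`, `V₃ ⊇ B, C`, with
`A ⫝_D B` in `V₁`, `B ⫝_D C` in `V₃` and `C ⫝_D A` in `V₂`, there is a bilinear space `W`
with bilinear monomorphisms from `V₁, V₂, V₃` making the cube commute, such that in `W`
`A ⫝_D V₃`, `B ⫝_D V₂` and `C ⫝_D V₁`; moreover `W` can be chosen symmetric (resp.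
alternating) if `V₁, V₂, V₃` all are. -/
theorem bilinear_three_amalgamation {K : Type u} [Field K]
    (D A B C V₁ V₂ V₃ : Type u)
    [AddCommGroup D] [Module K D] [AddCommGroup A] [Module K A]
    [AddCommGroup B] [Module K B] [AddCommGroup C] [Module K C]
    [AddCommGroup V₁] [Module K V₁] [AddCommGroup V₂] [Module K V₂]
    [AddCommGroup V₃] [Module K V₃]
    (BD : D →ₗ[K] D →ₗ[K] K) (BA : A →ₗ[K] A →ₗ[K] K) (BB : B →ₗ[K] B →ₗ[K] K)
    (BC : C →ₗ[K] C →ₗ[K] K) (B₁ : V₁ →ₗ[K] V₁ →ₗ[K] K) (B₂ : V₂ →ₗ[K] V₂ →ₗ[K] K)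
    (B₃ : V₃ →ₗ[K] V₃ →ₗ[K] K)
    (dA : D →ₗ[K] A) (dB : D →ₗ[K] B) (dC : D →ₗ[K] C)
    (aV₁ : A →ₗ[K] V₁) (bV₁ : B →ₗ[K] V₁) (aV₂ : A →ₗ[K] V₂) (cV₂ : C →ₗ[K] V₂)
    (bV₃ : B →ₗ[K] V₃) (cV₃ : C →ₗ[K] V₃)
    (hdA : Function.Injective dA) (hdAb : ∀ x y : D, BA (dA x) (dA y) = BD x y)
    (hdB : Function.Injective dB) (hdBb : ∀ x y : D, BB (dB x) (dB y) = BD x y)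
    (hdC : Function.Injective dC) (hdCb : ∀ x y : D, BC (dC x) (dC y) = BD x y)
    (haV₁ : Function.Injective aV₁) (haV₁b : ∀ x y : A, B₁ (aV₁ x) (aV₁ y) = BA x y)
    (hbV₁ : Function.Injective bV₁) (hbV₁b : ∀ x y : B, B₁ (bV₁ x) (bV₁ y) = BB x y)
    (haV₂ : Function.Injective aV₂) (haV₂b : ∀ x y : A, B₂ (aV₂ x) (aV₂ y) = BA x y)
    (hcV₂ : Function.Injective cV₂) (hcV₂b : ∀ x y : C, B₂ (cV₂ x) (cV₂ y) = BC x y)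
    (hbV₃ : Function.Injective bV₃) (hbV₃b : ∀ x y : B, B₃ (bV₃ x) (bV₃ y) = BB x y)
    (hcV₃ : Function.Injective cV₃) (hcV₃b : ∀ x y : C, B₃ (cV₃ x) (cV₃ y) = BC x y)
    (hcomm₁ : aV₁ ∘ₗ dA = bV₁ ∘ₗ dB)
    (hcomm₂ : aV₂ ∘ₗ dA = cV₂ ∘ₗ dC)
    (hcomm₃ : bV₃ ∘ₗ dB = cV₃ ∘ₗ dC)
    (hAB : LinearMap.range aV₁ ⊓ LinearMap.range bV₁ = LinearMap.range (aV₁ ∘ₗ dA))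
    (hBC : LinearMap.range bV₃ ⊓ LinearMap.range cV₃ = LinearMap.range (bV₃ ∘ₗ dB))
    (hCA : LinearMap.range cV₂ ⊓ LinearMap.range aV₂ = LinearMap.range (cV₂ ∘ₗ dC)) :
    ∃ (W : Type u) (_ : AddCommGroup W) (_ : Module K W)
      (BW : W →ₗ[K] W →ₗ[K] K) (g₁ : V₁ →ₗ[K] W) (g₂ : V₂ →ₗ[K] W) (g₃ : V₃ →ₗ[K] W),
      Function.Injective g₁ ∧ (∀ x y : V₁, BW (g₁ x) (g₁ y) = B₁ x y) ∧
      Function.Injective g₂ ∧ (∀ x y : V₂, BW (g₂ x) (g₂ y) = B₂ x y) ∧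
      Function.Injective g₃ ∧ (∀ x y : V₃, BW (g₃ x) (g₃ y) = B₃ x y) ∧
      g₁ ∘ₗ aV₁ = g₂ ∘ₗ aV₂ ∧ g₁ ∘ₗ bV₁ = g₃ ∘ₗ bV₃ ∧ g₂ ∘ₗ cV₂ = g₃ ∘ₗ cV₃ ∧
      (LinearMap.range (g₁ ∘ₗ aV₁) ⊓ LinearMap.range g₃ =
        LinearMap.range (g₁ ∘ₗ aV₁ ∘ₗ dA)) ∧
      (LinearMap.range (g₃ ∘ₗ bV₃) ⊓ LinearMap.range g₂ =
        LinearMap.range (g₁ ∘ₗ aV₁ ∘ₗ dA)) ∧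
      (LinearMap.range (g₂ ∘ₗ cV₂) ⊓ LinearMap.range g₁ =
        LinearMap.range (g₁ ∘ₗ aV₁ ∘ₗ dA)) ∧
      ((∀ x y : V₁, B₁ x y = B₁ y x) → (∀ x y : V₂, B₂ x y = B₂ y x) →
        (∀ x y : V₃, B₃ x y = B₃ y x) → ∀ x y : W, BW x y = BW y x) ∧
      ((∀ x : V₁, B₁ x x = 0) → (∀ x : V₂, B₂ x x = 0) →
        (∀ x : V₃, B₃ x x = 0) → ∀ x : W, BW x x = 0) :=
  bilinear_three_amalgamation_general D A B C V₁ V₂ V₃ BA BB BC B₁ B₂ B₃ dA dB dC aV₁ bV₁ aV₂ cV₂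
    bV₃ cV₃ hdB hdC haV₁ haV₁b hbV₁ hbV₁b haV₂ haV₂b hcV₂ hcV₂b hbV₃ hbV₃b hcV₃ hcV₃b hcomm₁ hcomm₂
    hcomm₃ hAB hBC hCA
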